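/- arXiv:math/0010184 — 2 statements merged into one kernel-verified Lean document; each statement's English description precedes it below -/
import Mathlib

section
/- For every α < π there exists D(α) < π/2 such that every spherical triangle with two angles ≤ α/2 and the third angle ≤ π/2 has diameter at most D(α). Equivalently, a spherical turnover with at least two cone angles ≤ α < π has diameter bounded away from π/2 by a constant depending only on α. -/
open Real

set_option maxHeartbeats 1000000

/-- The comparison angle in the model sphere `S²` (curvature `1`) at the apex of a hinge
with side lengths `a, b` and opposite side `c`, given by the spherical law of cosines. -/
noncomputable def sphericalCompAngle (a b c : ℝ) : ℝ :=
  Real.arccos ((Real.cos c - Real.cos a * Real.cos b) / (Real.sin a * Real.sin b))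

/-- Curvature `≥ 1` in the Alexandrov sense, via the `(1+3)`-point comparison. -/
def CurvGeOne (X : Type*) [MetricSpace X] : Prop :=
  ∀ p x y z : X, p ≠ x → p ≠ y → p ≠ z →
    sphericalCompAngle (dist p x) (dist p y) (dist x y) +
      sphericalCompAngle (dist p y) (dist p z) (dist y z) +
        sphericalCompAngle (dist p z) (dist p x) (dist z x) ≤ 2 * π

private lemma aux_arccos_le {t β : ℝ} (h : Real.arccos t ≤ β) (hβ : β < π) : Real.cos β ≤ t := by
  rcases le_or_gt t (-1) with ht | ht
  · exact absurd (Real.arccos_of_le_neg_one ht ▸ h) (by linarith)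
  rcases le_or_gt 1 t with ht1 | ht1
  · exact le_trans (Real.cos_le_one β) ht1
  calc Real.cos β ≤ Real.cos (Real.arccos t) :=
        Real.cos_le_cos_of_nonneg_of_le_pi (Real.arccos_nonneg t) hβ.le h
    _ = t := Real.cos_arccos ht.le ht1.le

private lemma aux_le_arccos {c d : ℝ} (hπ : d ≤ π) (hc1 : -1 ≤ c) (hc2 : c ≤ 1)
    (h : c ≤ Real.cos d) : d ≤ Real.arccos c := by
  by_contra hlt
  push_neg at hlt
  have := Real.cos_lt_cos_of_nonneg_of_le_pi (Real.arccos_nonneg c) hπ hlt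
  rw [Real.cos_arccos hc1 hc2] at this
  linarith

private lemma aux_ell {k cp sp cq sq cl sl : ℝ} (hk : 0 < k)
    (hp : cp ^ 2 + sp ^ 2 = 1) (hq : cq ^ 2 + sq ^ 2 = 1) (hl : cl ^ 2 + sl ^ 2 = 1)
    (hsp : 0 < sp) (hsq : 0 < sq) (hsl : 0 < sl)
    (h7 : k * (sp * sl) ≤ cq - cp * cl) (h8 : k * (sq * sl) ≤ cp - cq * cl)
    (h9 : 0 ≤ cl - cp * cq) : k ^ 2 ≤ cl := by
  have hcl1 : cl < 1 := by nlinarith [sq_nonneg (cl - 1), sq_nonneg (cl + 1), mul_pos hsl hsl]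
  have hcl1' : -1 < cl := by nlinarith [sq_nonneg (cl - 1), sq_nonneg (cl + 1), mul_pos hsl hsl]
  have hsum : k * sl * (sp + sq) ≤ (cp + cq) * (1 - cl) := by nlinarith
  have hpos : 0 < cp + cq := by
    nlinarith [mul_pos (mul_pos hk hsl) (add_pos hsp hsq)]
  have main : ∀ c1 s1 c2 : ℝ, c1 ^ 2 + s1 ^ 2 = 1 → 0 < s1 →
      k * (s1 * sl) ≤ c2 - c1 * cl → 0 ≤ cl - c1 * c2 →
      0 ≤ c1 → k * c1 * sl ≤ cl * s1 := by
    intro c1 s1 c2 hP hs1 hA hB hc1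
    have t1 : c1 * (k * (s1 * sl)) ≤ c1 * (c2 - c1 * cl) := mul_le_mul_of_nonneg_left hA hc1
    have t2 : s1 * (k * c1 * sl) ≤ s1 * (cl * s1) := by nlinarith
    exact le_of_mul_le_mul_left t2 hs1
  have hij : k * cp * sl ≤ cl * sp ∧ k * cq * sl ≤ cl * sq := by
    rcases le_or_gt 0 cp with hcp | hcp
    · rcases le_or_gt 0 cq with hcq | hcq
      · exact ⟨main cp sp cq hp hsp h7 h9 hcp, main cq sq cp hq hsq h8 (by nlinarith) hcq⟩
      · have hcp' : 0 < cp := by linarith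
        have hi := main cp sp cq hp hsp h7 h9 hcp
        have hcl0 : 0 < cl := by nlinarith [mul_pos (mul_pos hk hcp') hsl]
        exact ⟨hi, by nlinarith [mul_pos hcl0 hsq, mul_pos (mul_pos hk hsl) (neg_pos.2 hcq)]⟩
    · have hcq' : 0 < cq := by linarith
      have hj := main cq sq cp hq hsq h8 (by nlinarith) hcq'.le
      have hcl0 : 0 < cl := by nlinarith [mul_pos (mul_pos hk hcq') hsl]
      exact ⟨by nlinarith [mul_pos hcl0 hsp, mul_pos (mul_pos hk hsl) (neg_pos.2 hcp)], hj⟩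
  obtain ⟨hi, hj⟩ := hij
  have hfin : k * sl * (cp + cq) ≤ cl * (sp + sq) := by nlinarith
  have h2 : k * sl * (k * sl * (sp + sq)) ≤ (k * sl) * ((cp + cq) * (1 - cl)) :=
    mul_le_mul_of_nonneg_left hsum (by positivity)
  have h3 : (k * sl * (cp + cq)) * (1 - cl) ≤ (cl * (sp + sq)) * (1 - cl) :=
    mul_le_mul_of_nonneg_right hfin (by linarith)
  have h4 : (k ^ 2 * sl ^ 2) * (sp + sq) ≤ (cl * (1 - cl)) * (sp + sq) := by nlinarith
  have hstep3 : k ^ 2 * sl ^ 2 ≤ cl * (1 - cl) := le_of_mul_le_mul_right h4 (add_pos hsp hsq)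
  have h10 : k ^ 2 * (1 + cl) ≤ cl := by
    have h5 : (k ^ 2 * (1 + cl)) * (1 - cl) ≤ cl * (1 - cl) := by nlinarith
    exact le_of_mul_le_mul_right h5 (by linarith)
  nlinarith [mul_nonneg (sq_nonneg k) (by linarith : (0:ℝ) ≤ 1 + cl)]

private lemma aux_point {k cl sl ca sa cb sb : ℝ} (hk : 0 < k) (hk1 : k ≤ 1) (hcl : k ^ 2 ≤ cl)
    (hl : cl ^ 2 + sl ^ 2 = 1) (hsl : 0 < sl) (ha : ca ^ 2 + sa ^ 2 = 1) (hsa : 0 < sa)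
    (hb : cb ^ 2 + sb ^ 2 = 1) (hsb : 0 < sb)
    (h1 : k * (sa * sl) ≤ cb - ca * cl) (h2 : k * (sb * sl) ≤ ca - cb * cl) :
    k ^ 3 / 2 ≤ ca := by
  have hcl0 : 0 < cl := lt_of_lt_of_le (by positivity) hcl
  have hsl1 : sl ≤ 1 := by nlinarith [sq_nonneg cl, sq_nonneg (sl - 1)]
  have hcl1 : cl ≤ 1 := by nlinarith [sq_nonneg sl, sq_nonneg (cl - 1)]
  have hca' : ca * cl ^ 2 = ca - ca * sl ^ 2 := by linear_combination ca * hl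
  have key : (k * (sa * cl + sb)) * sl ≤ (ca * sl) * sl := by
    nlinarith [mul_le_mul_of_nonneg_left h1 hcl0.le]
  have key2 : k * (sa * cl + sb) ≤ ca * sl := le_of_mul_le_mul_right key hsl
  have hca0 : 0 ≤ ca := by
    nlinarith [mul_pos (mul_pos hk hsa) hcl0, mul_pos hk hsb]
  have hca1 : k * sa * cl ≤ ca := by
    have : ca * sl ≤ ca := by nlinarith
    nlinarith [mul_pos hk hsb]
  have haa : k ^ 2 * cl ^ 2 * (ca ^ 2 + sa ^ 2) = k ^ 2 * cl ^ 2 := by rw [ha]; ring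
  have hsq : k ^ 2 * cl ^ 2 ≤ ca ^ 2 * (1 + k ^ 2 * cl ^ 2) := by
    nlinarith [mul_self_le_mul_self (by positivity : (0:ℝ) ≤ k * sa * cl) hca1]
  have e1 : k ^ 4 ≤ cl ^ 2 := by nlinarith
  have e2 : k ^ 2 * cl ^ 2 ≤ 1 := by nlinarith [sq_nonneg k, sq_nonneg cl, sq_nonneg (k*cl)]
  have e3 : k ^ 6 ≤ k ^ 2 * cl ^ 2 := by nlinarith [sq_nonneg k]
  have hfin : k ^ 6 / 2 ≤ ca ^ 2 := by nlinarith [sq_nonneg ca]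
  nlinarith [hfin, hca0, hk, pow_pos hk 3, sq_nonneg (ca - k ^ 3 / 2), sq_nonneg (ca + k ^ 3 / 2)]

/-- For every `α < π` there exists `D(α) < π/2` such that every spherical
turnover (double of a spherical triangle with two angles `≤ α/2` and third angle `≤ π/2`,
i.e. a spherical cone surface homeomorphic to `S²` with three cone points of angle `≤ π`,
at least two of which are `≤ α`) has diameter at most `D(α)`. -/
theorem turnover_diam_bounded_away_from_pi_div_two :
    ∀ α : ℝ, 0 < α → α < π →
      ∃ D : ℝ, D < π / 2 ∧
        ∀ (Λ : Type) [MetricSpace Λ] [CompactSpace Λ],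
          CurvGeOne Λ →
          Nonempty (Λ ≃ₜ Metric.sphere (0 : EuclideanSpace ℝ (Fin 3)) 1) →
          ∀ (v : Fin 3 → Λ) (θ : Fin 3 → ℝ),
            Function.Injective v →
            (∀ i, 0 < θ i) → (∀ i, θ i ≤ π) →
            (∀ i, ∀ x y : Λ, x ≠ v i → y ≠ v i →
              sphericalCompAngle (dist (v i) x) (dist (v i) y) (dist x y) ≤ θ i / 2) →
            (∃ i j : Fin 3, i ≠ j ∧ θ i ≤ α ∧ θ j ≤ α) →
            Metric.diam (Set.univ : Set Λ) ≤ D := by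
  intro α hα hαπ
  have hπ := Real.pi_pos
  set k := Real.cos (α / 2) with hkdef
  have hk0 : 0 < k := Real.cos_pos_of_mem_Ioo ⟨by linarith, by linarith⟩
  have hk1 : k ≤ 1 := Real.cos_le_one _
  have hk6 : k ^ 6 ≤ 1 := pow_le_one₀ hk0.le hk1
  have hk30 : 0 < k ^ 3 := pow_pos hk0 3
  have hk31 : k ^ 3 ≤ 1 := pow_le_one₀ hk0.le hk1
  have hk60 : 0 < k ^ 6 := pow_pos hk0 6
  have hk64 : k ^ 6 / 4 ≤ k ^ 3 / 2 := by nlinarith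
  refine ⟨Real.arccos (k ^ 6 / 4), Real.arccos_lt_pi_div_two.2 (by positivity), ?_⟩
  intro Λ _ _ _hcurv he v θ hinj hθ0 hθπ hang hex
  obtain ⟨i, j, hij, hθi, hθj⟩ := hex
  obtain ⟨m, hmi, hmj⟩ : ∃ m : Fin 3, m ≠ i ∧ m ≠ j := by
    have h3 : ∀ i j : Fin 3, i ≠ j → ∃ m : Fin 3, m ≠ i ∧ m ≠ j := by decide
    exact h3 i j hij
  obtain ⟨e⟩ := he
  have hpc : PathConnectedSpace Λ := by
    have hrank : 1 < Module.rank ℝ (EuclideanSpace ℝ (Fin 3)) := by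
      have h1 : Module.finrank ℝ (EuclideanSpace ℝ (Fin 3)) = 3 := finrank_euclideanSpace_fin
      rw [← Module.finrank_eq_rank, h1]
      exact_mod_cast (by norm_num : (1:ℕ) < 3)
    have hsp : IsPathConnected (Metric.sphere (0 : EuclideanSpace ℝ (Fin 3)) 1) :=
      isPathConnected_sphere hrank 0 zero_le_one
    have : PathConnectedSpace (Metric.sphere (0 : EuclideanSpace ℝ (Fin 3)) 1) :=
      isPathConnected_iff_pathConnectedSpace.1 hsp
    exact e.symm.surjective.pathConnectedSpace e.symm.continuous
  set A := v i with hAdef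
  set B := v j with hBdef
  set C := v m with hCdef
  have hBA : B ≠ A := fun h => hij (hinj h).symm
  have hAB : A ≠ B := fun h => hij (hinj h)
  have hCA : C ≠ A := fun h => hmi (hinj h)
  have hCB : C ≠ B := fun h => hmj (hinj h)
  -- extracted vertex inequalities
  have hVA : ∀ x y : Λ, x ≠ A → y ≠ A →
      k ≤ (Real.cos (dist x y) - Real.cos (dist A x) * Real.cos (dist A y)) /
        (Real.sin (dist A x) * Real.sin (dist A y)) := by
    intro x y hx hy
    have h := hang i x y hx hy
    have h2 : Real.arccos ((Real.cos (dist x y) - Real.cos (dist A x) * Real.cos (dist A y)) /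
        (Real.sin (dist A x) * Real.sin (dist A y))) ≤ α / 2 := le_trans h (by linarith)
    exact aux_arccos_le h2 (by linarith)
  have hVB : ∀ x y : Λ, x ≠ B → y ≠ B →
      k ≤ (Real.cos (dist x y) - Real.cos (dist B x) * Real.cos (dist B y)) /
        (Real.sin (dist B x) * Real.sin (dist B y)) := by
    intro x y hx hy
    have h := hang j x y hx hy
    have h2 : Real.arccos ((Real.cos (dist x y) - Real.cos (dist B x) * Real.cos (dist B y)) /
        (Real.sin (dist B x) * Real.sin (dist B y))) ≤ α / 2 := le_trans h (by linarith)
    exact aux_arccos_le h2 (by linarith)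
  have hVC : ∀ x y : Λ, x ≠ C → y ≠ C →
      (0:ℝ) ≤ (Real.cos (dist x y) - Real.cos (dist C x) * Real.cos (dist C y)) /
        (Real.sin (dist C x) * Real.sin (dist C y)) := by
    intro x y hx hy
    have h := hang m x y hx hy
    have h2 : Real.arccos ((Real.cos (dist x y) - Real.cos (dist C x) * Real.cos (dist C y)) /
        (Real.sin (dist C x) * Real.sin (dist C y))) ≤ π / 2 := le_trans h (by linarith [hθπ m])
    have h3 := aux_arccos_le h2 (by linarith)
    rwa [Real.cos_pi_div_two] at h3
  -- distances from A and B lie in (0, π)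
  have hdist : ∀ w : Λ, (∀ x y : Λ, x ≠ w → y ≠ w →
      k ≤ (Real.cos (dist x y) - Real.cos (dist w x) * Real.cos (dist w y)) /
        (Real.sin (dist w x) * Real.sin (dist w y))) →
      ∀ x : Λ, x ≠ w → 0 < dist w x ∧ dist w x < π := by
    intro w hV x hx
    have hsin : ∀ z : Λ, z ≠ w → Real.sin (dist w z) ≠ 0 := by
      intro z hz h0
      have hzz := hV z z hz hz
      rw [dist_self, h0] at hzz
      simp only [mul_zero, div_zero] at hzz
      linarith
    refine ⟨dist_pos.2 (Ne.symm hx), ?_⟩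
    by_contra hge
    push_neg at hge
    obtain γ := PathConnectedSpace.somePath w x
    have hcont : Continuous fun t : ℝ => dist w (γ.extend t) :=
      continuous_const.dist γ.continuous_extend
    have hmem : π ∈ Set.Icc (dist w (γ.extend 0)) (dist w (γ.extend 1)) := by
      rw [Path.extend_zero, Path.extend_one, dist_self]
      exact ⟨hπ.le, hge⟩
    obtain ⟨t, _, ht⟩ := intermediate_value_Icc zero_le_one hcont.continuousOn hmem
    have ht' : dist w (γ.extend t) = π := ht
    have hzw : γ.extend t ≠ w := by
      intro h
      rw [h, dist_self] at ht'
      exact hπ.ne ht'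
    exact hsin _ hzw (by rw [ht']; exact Real.sin_pi)
  have hDA := hdist A hVA
  have hDB := hdist B hVB
  -- basic side data
  obtain ⟨hl0, hlπ⟩ := hDA B hBA
  obtain ⟨hp0, hpπ⟩ := hDA C hCA
  obtain ⟨hq0, hqπ⟩ := hDB C hCB
  have hsl : 0 < Real.sin (dist A B) := Real.sin_pos_of_pos_of_lt_pi hl0 hlπ
  have hsp : 0 < Real.sin (dist A C) := Real.sin_pos_of_pos_of_lt_pi hp0 hpπ
  have hsq : 0 < Real.sin (dist B C) := Real.sin_pos_of_pos_of_lt_pi hq0 hqπ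
  -- the three vertex-to-vertex inequalities
  have h7 : k * (Real.sin (dist A C) * Real.sin (dist A B)) ≤
      Real.cos (dist B C) - Real.cos (dist A C) * Real.cos (dist A B) := by
    have h := hVA C B hCA hBA
    rw [dist_comm C B] at h
    exact (le_div_iff₀ (mul_pos hsp hsl)).1 h
  have h8 : k * (Real.sin (dist B C) * Real.sin (dist A B)) ≤
      Real.cos (dist A C) - Real.cos (dist B C) * Real.cos (dist A B) := by
    have h := hVB C A hCB hAB
    rw [dist_comm C A, dist_comm B A] at h
    exact (le_div_iff₀ (mul_pos hsq hsl)).1 h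
  have h9 : 0 ≤ Real.cos (dist A B) - Real.cos (dist A C) * Real.cos (dist B C) := by
    have h := hVC A B (Ne.symm hCA) (Ne.symm hCB)
    rw [dist_comm C A, dist_comm C B] at h
    have := (le_div_iff₀ (mul_pos hsp hsq)).1 h
    linarith [this]
  have hcl : k ^ 2 ≤ Real.cos (dist A B) :=
    aux_ell hk0 (Real.cos_sq_add_sin_sq (dist A C)) (Real.cos_sq_add_sin_sq (dist B C))
      (Real.cos_sq_add_sin_sq (dist A B)) hsp hsq hsl h7 h8 h9
  -- per-point bound
  have hhalf : ∀ u : ℝ, u < π → 0 < Real.cos u → u ≤ π / 2 := by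
    intro u hu hcu
    by_contra hgt
    push_neg at hgt
    have := Real.cos_nonpos_of_pi_div_two_le_of_le hgt.le (by linarith)
    linarith
  have hptA : ∀ x : Λ, k ^ 3 / 2 ≤ Real.cos (dist A x) ∧ dist A x ≤ π / 2 := by
    intro x
    by_cases hxA : x = A
    · subst hxA
      rw [dist_self]
      constructor
      · rw [Real.cos_zero]; linarith
      · linarith
    by_cases hxB : x = B
    · subst hxB
      refine ⟨by nlinarith, hhalf _ hlπ (by nlinarith [sq_nonneg k])⟩
    · obtain ⟨ha0, haπ⟩ := hDA x hxA
      obtain ⟨hb0, hbπ⟩ := hDB x hxB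
      have hsa : 0 < Real.sin (dist A x) := Real.sin_pos_of_pos_of_lt_pi ha0 haπ
      have hsb : 0 < Real.sin (dist B x) := Real.sin_pos_of_pos_of_lt_pi hb0 hbπ
      have h1 : k * (Real.sin (dist A x) * Real.sin (dist A B)) ≤
          Real.cos (dist B x) - Real.cos (dist A x) * Real.cos (dist A B) := by
        have h := hVA x B hxA hBA
        rw [dist_comm x B] at h
        exact (le_div_iff₀ (mul_pos hsa hsl)).1 h
      have h2 : k * (Real.sin (dist B x) * Real.sin (dist A B)) ≤
          Real.cos (dist A x) - Real.cos (dist B x) * Real.cos (dist A B) := by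
        have h := hVB x A hxB hAB
        rw [dist_comm x A, dist_comm B A] at h
        exact (le_div_iff₀ (mul_pos hsb hsl)).1 h
      have hca := aux_point hk0 hk1 hcl (Real.cos_sq_add_sin_sq (dist A B)) hsl
        (Real.cos_sq_add_sin_sq (dist A x)) hsa (Real.cos_sq_add_sin_sq (dist B x)) hsb h1 h2
      exact ⟨hca, hhalf _ haπ (by linarith)⟩
  -- final pairwise bound
  have hpair : ∀ x y : Λ, dist x y ≤ Real.arccos (k ^ 6 / 4) := by
    have harc : ∀ z : Λ, dist A z ≤ Real.arccos (k ^ 6 / 4) := by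
      intro z
      obtain ⟨hcz, hz2⟩ := hptA z
      exact aux_le_arccos (by linarith) (by linarith) (by linarith) (by linarith)
    intro x y
    by_cases hxA : x = A
    · subst hxA; exact harc y
    by_cases hyA : y = A
    · subst hyA; rw [dist_comm]; exact harc x
    · obtain ⟨hcx, hx2⟩ := hptA x
      obtain ⟨hcy, hy2⟩ := hptA y
      have hsax : 0 ≤ Real.sin (dist A x) :=
        Real.sin_nonneg_of_nonneg_of_le_pi dist_nonneg (by linarith)
      have hsay : 0 ≤ Real.sin (dist A y) :=
        Real.sin_nonneg_of_nonneg_of_le_pi dist_nonneg (by linarith)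
      have h := hVA x y hxA hyA
      have h5 := (le_div_iff₀ (mul_pos (Real.sin_pos_of_pos_of_lt_pi ((hDA x hxA).1)
        (by linarith)) (Real.sin_pos_of_pos_of_lt_pi ((hDA y hyA).1) (by linarith)))).1 h
      have hπd : dist x y ≤ π := by
        have := dist_triangle_left x y A
        linarith
      refine aux_le_arccos hπd (by linarith) (by linarith) ?_
      have hprod : k ^ 6 / 4 ≤ Real.cos (dist A x) * Real.cos (dist A y) := by
        have h30 : (0:ℝ) < k ^ 3 / 2 := by positivity
        nlinarith [mul_le_mul hcx hcy h30.le (by linarith : (0:ℝ) ≤ Real.cos (dist A x))]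
      nlinarith [mul_nonneg (mul_nonneg hk0.le hsax) hsay]
  exact Metric.diam_le_of_forall_dist_le (Real.arccos_nonneg _)
    (fun x _ y _ => hpair x y)
end

section
/- Let Λ be the metric suspension (spherical join with two points) of a circle of length α ≤ π, i.e. the link model S²(α,α). If two points of Λ have distance > 2π/3, then each pole of the suspension lies within distance < π/3 of one of the two points. -/
open Real

/-- The distance in the metric suspension of a circle between the points with pole-distances
`t₁, t₂ ∈ [0,π]` lying over circle points at circle-distance `δ`:
`cos d = cos t₁ cos t₂ + sin t₁ sin t₂ cos (min δ π)`. -/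
noncomputable def suspDist (t₁ t₂ δ : ℝ) : ℝ :=
  Real.arccos (Real.cos t₁ * Real.cos t₂ + Real.sin t₁ * Real.sin t₂ * Real.cos (min δ π))

/-- Let `Λ` be the metric suspension of a circle of length `α ≤ π` (the link
model `S²(α,α)`), with points described by pairs `(ξ, t)`, `t ∈ [0,π]` the distance to the
pole `t = 0` (so `π − t` is the distance to the pole `t = π`), circle distances lying in
`[0, α/2]`.  If two points of `Λ` have distance `> 2π/3`, then each pole lies within
distance `< π/3` of one of the two points. -/
theorem pole_near_far_points
    (α t₁ t₂ δ : ℝ) (hα0 : 0 < α) (hα : α ≤ π)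
    (ht₁ : t₁ ∈ Set.Icc (0 : ℝ) π) (ht₂ : t₂ ∈ Set.Icc (0 : ℝ) π)
    (hδ : δ ∈ Set.Icc (0 : ℝ) (α / 2))
    (hfar : 2 * π / 3 < suspDist t₁ t₂ δ) :
    (t₁ < π / 3 ∨ t₂ < π / 3) ∧ (π - t₁ < π / 3 ∨ π - t₂ < π / 3) := by
  obtain ⟨ht₁0, ht₁π⟩ := ht₁
  obtain ⟨ht₂0, ht₂π⟩ := ht₂
  obtain ⟨hδ0, hδα⟩ := hδ
  have hπ := Real.pi_pos
  set x := Real.cos t₁ * Real.cos t₂ + Real.sin t₁ * Real.sin t₂ * Real.cos (min δ π)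
  -- from hfar, x < -1/2
  have hx : x < -1/2 := by
    by_contra h
    push_neg at h
    have : suspDist t₁ t₂ δ ≤ Real.arccos (-1/2) := by
      unfold suspDist
      simp only [Real.arccos]
      have := Real.monotone_arcsin h
      linarith
    rw [show (-1/2 : ℝ) = Real.cos (2*π/3) by
      rw [show (2*π/3 : ℝ) = π - π/3 by ring, Real.cos_pi_sub, Real.cos_pi_div_three]; norm_num,
      Real.arccos_cos (by positivity) (by linarith)] at this
    linarith
  -- second term is nonneg
  have hmin : min δ π = δ := min_eq_left (by linarith)
  have hcosδ : 0 ≤ Real.cos (min δ π) := by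
    rw [hmin]
    exact Real.cos_nonneg_of_mem_Icc ⟨by linarith, by linarith⟩
  have hs₁ : 0 ≤ Real.sin t₁ := Real.sin_nonneg_of_nonneg_of_le_pi ht₁0 ht₁π
  have hs₂ : 0 ≤ Real.sin t₂ := Real.sin_nonneg_of_nonneg_of_le_pi ht₂0 ht₂π
  have hprod : Real.cos t₁ * Real.cos t₂ < -1/2 := by
    have : 0 ≤ Real.sin t₁ * Real.sin t₂ * Real.cos (min δ π) := by positivity
    simp only [x] at hx
    linarith
  have hc₁l := Real.neg_one_le_cos t₁
  have hc₁u := Real.cos_le_one t₁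
  have hc₂l := Real.neg_one_le_cos t₂
  have hc₂u := Real.cos_le_one t₂
  have key : ∀ s : ℝ, s ∈ Set.Icc (0:ℝ) π →
      ((1/2 < Real.cos s → s < π/3) ∧ (Real.cos s < -1/2 → π - s < π/3)) := by
    intro s ⟨hs0, hsπ⟩
    constructor
    · intro h
      by_contra hle
      push_neg at hle
      have := Real.cos_le_cos_of_nonneg_of_le_pi (by positivity) hsπ hle
      rw [Real.cos_pi_div_three] at this
      linarith
    · intro h
      by_contra hle
      push_neg at hle
      have hs : s ≤ 2*π/3 := by linarith
      have := Real.cos_le_cos_of_nonneg_of_le_pi hs0 (by linarith) hs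
      rw [show (2*π/3 : ℝ) = π - π/3 by ring, Real.cos_pi_sub, Real.cos_pi_div_three] at this
      linarith
  rcases lt_or_ge 0 (Real.cos t₁) with h1 | h1
  · -- cos t₁ > 0, so cos t₂ < -1/2 and cos t₁ > 1/2
    have h2 : Real.cos t₂ < -1/2 := by nlinarith
    have h1' : 1/2 < Real.cos t₁ := by nlinarith
    exact ⟨Or.inl ((key t₁ ⟨ht₁0, ht₁π⟩).1 h1'), Or.inr ((key t₂ ⟨ht₂0, ht₂π⟩).2 h2)⟩
  · have h1' : Real.cos t₁ < -1/2 := by nlinarith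
    have h2 : 1/2 < Real.cos t₂ := by nlinarith
    exact ⟨Or.inr ((key t₂ ⟨ht₂0, ht₂π⟩).1 h2), Or.inl ((key t₁ ⟨ht₁0, ht₁π⟩).2 h1')⟩
end
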